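/- arXiv:2412.04129 — 2 statements merged into one kernel-verified Lean document; each statement's English description precedes it below -/
import Mathlib

section
/- (Lemma 1.) Let ξ_f : ℝ → ℝ^{n_s} and ξ_h : ℝ → ℝ^{n_p} be trajectories, let t ≤ T be real numbers, and suppose the relative trajectory is non-increasing in the levels of V: for all t' ∈ [t, T], V(L ξ_f(t') − M ξ_h(t'), t') ≤ V(L ξ_f(t) − M ξ_h(t), t). Let s := ξ_f(t), p := ξ_h(t), and let c ∈ ℝ satisfy p ∈ 𝒯_p(s,t;c), i.e. V(Ls − Mp, t) ≤ c. Then for every t' ∈ [t, T] and every set B ⊆ ℝ^{n_s}: if ξ_h(t') ∈ ℱ_B(t';c), then ξ_f(t') ∈ B. -/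
open Matrix

/-- Planning system sublevel set `𝒯_p(s,t;c)`. -/
def planSublevel {n_s n_p n_r : ℕ} (L : Matrix (Fin n_r) (Fin n_s) ℝ)
    (M : Matrix (Fin n_r) (Fin n_p) ℝ) (V : (Fin n_r → ℝ) → ℝ → ℝ)
    (s : Fin n_s → ℝ) (t c : ℝ) : Set (Fin n_p → ℝ) :=
  {p | V (L.mulVec s - M.mulVec p) t ≤ c}

/-- Set satisfaction map `ℱ_B(t;c) = ⋂_{s ∈ Bᶜ} (𝒯_p(s,t;c))ᶜ`. -/
def setSatisfaction {n_s n_p n_r : ℕ} (L : Matrix (Fin n_r) (Fin n_s) ℝ)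
    (M : Matrix (Fin n_r) (Fin n_p) ℝ) (V : (Fin n_r → ℝ) → ℝ → ℝ)
    (B : Set (Fin n_s → ℝ)) (t c : ℝ) : Set (Fin n_p → ℝ) :=
  ⋂ s ∈ Bᶜ, (planSublevel L M V s t c)ᶜ

/-- Lemma 1: if the value is non-increasing along the pair of trajectories and
the planning state starts in the sublevel set `𝒯_p(ξ_f(t), t; c)`, then whenever
the planning trajectory lies in `ℱ_B(t';c)`, the tracking trajectory lies in `B`. -/
theorem tracking_in_B_of_planning_in_setSatisfaction {n_s n_p n_r : ℕ}
    (L : Matrix (Fin n_r) (Fin n_s) ℝ) (M : Matrix (Fin n_r) (Fin n_p) ℝ)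
    (V : (Fin n_r → ℝ) → ℝ → ℝ)
    (ξf : ℝ → Fin n_s → ℝ) (ξh : ℝ → Fin n_p → ℝ)
    (t T : ℝ) (htT : t ≤ T)
    (hmono : ∀ t' ∈ Set.Icc t T,
      V (L.mulVec (ξf t') - M.mulVec (ξh t')) t' ≤
        V (L.mulVec (ξf t) - M.mulVec (ξh t)) t)
    (c : ℝ) (hc : ξh t ∈ planSublevel L M V (ξf t) t c)
    (t' : ℝ) (ht' : t' ∈ Set.Icc t T) (B : Set (Fin n_s → ℝ))
    (hF : ξh t' ∈ setSatisfaction L M V B t' c) :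
    ξf t' ∈ B := by
  by_contra hB
  have h := Set.mem_iInter₂.mp hF (ξf t') hB
  exact h (le_trans (hmono t' ht') hc)
end

section
/- (Theorem 1.) Let ξ_f : ℝ → ℝ^{n_s} and ξ_h : ℝ → ℝ^{n_p} be trajectories, let t_i ≤ t_f be real numbers, and suppose that for all t ∈ [t_i, t_f], V(L ξ_f(t) − M ξ_h(t), t) ≤ V(L ξ_f(t_i) − M ξ_h(t_i), t_i). Let s := ξ_f(t_i), p := ξ_h(t_i), and let c ∈ ℝ satisfy p ∈ 𝒯_p(s, t_i; c), i.e. V(Ls − Mp, t_i) ≤ c. Then for any constraint set 𝒞 ⊆ ℝ^{n_s}, goal set 𝒢 ⊆ ℝ^{n_s}, and any t ∈ [t_i, t_f]: (a) if ξ_h(t) ∈ ℱ_𝒞(t;c) then ξ_f(t) ∈ 𝒞 (constraint satisfaction), and (b) if ξ_h(t) ∈ ℱ_𝒢(t;c) then ξ_f(t) ∈ 𝒢 (goal reaching). -/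
open Matrix

/-- Theorem 1: constraint satisfaction (a) and goal reaching (b) for the
tracking trajectory whenever the planning trajectory lies in the corresponding
set satisfaction maps. -/
theorem constraint_satisfaction_and_goal_reaching {n_s n_p n_r : ℕ}
    (L : Matrix (Fin n_r) (Fin n_s) ℝ) (M : Matrix (Fin n_r) (Fin n_p) ℝ)
    (V : (Fin n_r → ℝ) → ℝ → ℝ)
    (ξf : ℝ → Fin n_s → ℝ) (ξh : ℝ → Fin n_p → ℝ)
    (ti tf : ℝ) (hti : ti ≤ tf)
    (hmono : ∀ t ∈ Set.Icc ti tf,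
      V (L.mulVec (ξf t) - M.mulVec (ξh t)) t ≤
        V (L.mulVec (ξf ti) - M.mulVec (ξh ti)) ti)
    (c : ℝ) (hc : ξh ti ∈ planSublevel L M V (ξf ti) ti c)
    (𝒞 𝒢 : Set (Fin n_s → ℝ)) (t : ℝ) (ht : t ∈ Set.Icc ti tf) :
    (ξh t ∈ setSatisfaction L M V 𝒞 t c → ξf t ∈ 𝒞) ∧
    (ξh t ∈ setSatisfaction L M V 𝒢 t c → ξf t ∈ 𝒢) := by
  have key : ∀ B : Set (Fin n_s → ℝ),
      ξh t ∈ setSatisfaction L M V B t c → ξf t ∈ B := by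
    intro B hB
    by_contra h
    have := Set.mem_iInter₂.mp hB (ξf t) h
    apply this
    exact le_trans (hmono t ht) hc
  exact ⟨key 𝒞, key 𝒢⟩
end
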